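/- Suppose f : H → ℂ satisfies f(τ) = Σ_{i=0}^m f_i(τ) E_2(τ)^i where each f_i is a holomorphic modular form of weight k - 2i on a congruence subgroup Γ with character, E_2(Sτ) = τ² E_2(τ) - τ/(2πi) with S = (0 -1; 1 0), and suppose additionally that τ^{-k} f(Sτ) admits a convergent q^{1/N}-expansion (in non-negative powers). Then f_i = 0 for all i ≥ 1, i.e., f = f_0 is a modular form of weight k. -/

import Mathlib

open Complex UpperHalfPlane
open scoped Manifold MatrixGroups

/-- `g` admits a convergent q-expansion `g(τ) = Σ_{n ≥ 0} a(n) q^{n/N}` with `q = e^{2πiτ}`. -/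
def HasQExpansion (N : ℕ) (g : UpperHalfPlane → ℂ) : Prop :=
  ∃ a : ℕ → ℂ, ∀ τ : UpperHalfPlane,
    HasSum (fun n : ℕ => a n * Complex.exp (2 * Real.pi * Complex.I * n * τ / N)) (g τ)


section Aux
open Filter Topology

lemma qexp_periodic {N : ℕ} (hN : 0 < N) {g : UpperHalfPlane → ℂ} (h : HasQExpansion N g)
    (n : ℤ) (τ : UpperHalfPlane) : g (((n : ℝ) * N) +ᵥ τ) = g τ := by
  obtain ⟨a, ha⟩ := h
  have hNc : (N : ℂ) ≠ 0 := Nat.cast_ne_zero.mpr hN.ne'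
  have h1 := ha (((n : ℝ) * N) +ᵥ τ)
  have h2 := ha τ
  refine HasSum.unique ?_ h2
  convert h1 using 2 with j
  rw [coe_vadd]
  push_cast
  rw [show (2 * (Real.pi:ℂ) * Complex.I * j * ((n * N) + τ) / N : ℂ)
      = 2 * (Real.pi:ℂ) * Complex.I * j * τ / N + ((j * n : ℤ) : ℂ) * (2 * (Real.pi:ℂ) * Complex.I) by push_cast; field_simp; ring]
  rw [Complex.exp_add, Complex.exp_int_mul_two_pi_mul_I, mul_one]

lemma inv_helper (x c : ℂ) (hx : x ≠ 0) :
    -(x)⁻¹ / (-c * -(x)⁻¹ + 1) = -((x + c)⁻¹) := by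
  have hD : -c * -(x)⁻¹ + 1 = (x + c) / x := by field_simp; ring
  rw [hD, div_div_eq_mul_div, neg_mul, neg_div, neg_inj, inv_mul_eq_div,
    div_self hx, one_div]

def gmat (N : ℕ) : Matrix.SpecialLinearGroup (Fin 2) ℤ :=
  ⟨!![1,0;-(N:ℤ),1], by simp [Matrix.det_fin_two_of]⟩

def gmat' (N : ℕ) : Matrix.SpecialLinearGroup (Fin 2) ℤ :=
  ⟨!![1,0;(N:ℤ),1], by simp [Matrix.det_fin_two_of]⟩

lemma gmat_smul (N : ℕ) (σ : UpperHalfPlane) :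
    ((gmat N • σ : UpperHalfPlane) : ℂ) = (σ : ℂ) / (-(N:ℂ) * σ + 1) := by
  rw [specialLinearGroup_apply, coe_mk]
  simp [gmat]

lemma gmat'_smul (N : ℕ) (σ : UpperHalfPlane) :
    ((gmat' N • σ : UpperHalfPlane) : ℂ) = (σ : ℂ) / ((N:ℂ) * σ + 1) := by
  rw [specialLinearGroup_apply, coe_mk]
  simp [gmat']

lemma coe_S_smul (σ : UpperHalfPlane) :
    ((ModularGroup.S • σ : UpperHalfPlane) : ℂ) = -(σ : ℂ)⁻¹ := by
  rw [modular_S_smul, coe_mk, inv_neg]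

lemma vadd_ne (N : ℕ) (n : ℤ) (τ : UpperHalfPlane) : ((n:ℂ)*N + τ) ≠ 0 := by
  have := UpperHalfPlane.ne_zero ((((n:ℝ))*N) +ᵥ τ)
  rw [coe_vadd] at this
  push_cast at this
  exact this

lemma pt_up (N : ℕ) (n : ℤ) (τ : UpperHalfPlane) :
    gmat N • (ModularGroup.S • ((((n:ℝ))*N) +ᵥ τ)) =
      ModularGroup.S • (((((n+1:ℤ)):ℝ)*N) +ᵥ τ) := by
  apply UpperHalfPlane.ext
  rw [gmat_smul, coe_S_smul, coe_S_smul, coe_vadd, coe_vadd]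
  have h1 : ((n:ℂ)*N + τ : ℂ) ≠ 0 := vadd_ne N n τ
  push_cast
  rw [inv_helper _ _ h1, show ((n:ℂ)+1)*N + (τ:ℂ) = (n:ℂ)*N + τ + N by ring]

lemma pt_down (N : ℕ) (n : ℤ) (τ : UpperHalfPlane) :
    gmat' N • (ModularGroup.S • ((((n:ℝ))*N) +ᵥ τ)) =
      ModularGroup.S • (((((n-1:ℤ)):ℝ)*N) +ᵥ τ) := by
  apply UpperHalfPlane.ext
  rw [gmat'_smul, coe_S_smul, coe_S_smul, coe_vadd, coe_vadd]
  have h1 : ((n:ℂ)*N + τ : ℂ) ≠ 0 := vadd_ne N n τ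
  push_cast
  rw [show ((N:ℂ) * -((n:ℂ)*N + τ)⁻¹ + 1) = (-(-(N:ℂ)) * -((n:ℂ)*N + τ)⁻¹ + 1) by ring,
    inv_helper _ _ h1, show ((n:ℂ)-1)*N + (τ:ℂ) = (n:ℂ)*N + τ + -N by ring]

lemma gmat_mem (N : ℕ) : gmat N ∈ CongruenceSubgroup.Gamma N := by
  rw [CongruenceSubgroup.Gamma_mem]; refine ⟨?_, ?_, ?_, ?_⟩ <;> simp [gmat]
lemma gmat'_mem (N : ℕ) : gmat' N ∈ CongruenceSubgroup.Gamma N := by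
  rw [CongruenceSubgroup.Gamma_mem]; refine ⟨?_, ?_, ?_, ?_⟩ <;> simp [gmat']

lemma gmat'_inv (N : ℕ) : gmat' N = (gmat N)⁻¹ := by
  rw [eq_inv_iff_mul_eq_one]
  ext i j
  rw [Matrix.SpecialLinearGroup.coe_mul]
  fin_cases i <;> fin_cases j <;>
    simp [gmat, gmat', Matrix.SpecialLinearGroup.coe_mul, Matrix.mul_apply, Fin.sum_univ_two]

lemma trans_rel (N : ℕ) (k : ℤ) (m : ℕ)
    (Γ : Subgroup (Matrix.SpecialLinearGroup (Fin 2) ℤ))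
    (hΓ : CongruenceSubgroup.Gamma N ≤ Γ) (ε : Γ →* ℂˣ)
    (f' : ℕ → UpperHalfPlane → ℂ)
    (hmod : ∀ i ≤ m, ∀ γ : Γ, ∀ τ : UpperHalfPlane,
      f' i (((γ : Matrix.SpecialLinearGroup (Fin 2) ℤ)) • τ) =
        (ε γ : ℂ) *
          (((γ : Matrix.SpecialLinearGroup (Fin 2) ℤ) : Matrix (Fin 2) (Fin 2) ℤ) 1 0 * τ +
            ((γ : Matrix.SpecialLinearGroup (Fin 2) ℤ) : Matrix (Fin 2) (Fin 2) ℤ) 1 1) ^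
              (k - 2 * i) * f' i τ)
    (i : ℕ) (him : i ≤ m) (τ : UpperHalfPlane) (n : ℤ) :
    f' i (ModularGroup.S • ((((n:ℝ))*N) +ᵥ τ)) =
      (ε ⟨gmat N, hΓ (gmat_mem N)⟩ : ℂ)^n * (((n:ℂ)*N + τ)/(τ:ℂ))^(k - 2*(i:ℤ)) *
        f' i (ModularGroup.S • τ) := by
  set γ1 : Γ := ⟨gmat N, hΓ (gmat_mem N)⟩ with hγ1
  set u : ℂ := (ε γ1 : ℂ) with hu
  have hune : u ≠ 0 := Units.ne_zero _
  set e : ℤ := k - 2*(i:ℤ) with he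
  have hτne := UpperHalfPlane.ne_zero τ
  -- base of hmod for γ1 at a point σ:
  have key_up : ∀ σ : UpperHalfPlane, f' i ((gmat N) • σ) = u * ((-(N:ℂ)) * σ + 1)^e * f' i σ := by
    intro σ
    have := hmod i him γ1 σ
    rw [← hu, ← he] at this
    simpa [hγ1, gmat] using this
  have key_down : ∀ σ : UpperHalfPlane, f' i ((gmat' N) • σ) = u⁻¹ * (((N:ℂ)) * σ + 1)^e * f' i σ := by
    intro σ
    have hginv : (⟨gmat' N, hΓ (gmat'_mem N)⟩ : Γ) = γ1⁻¹ := by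
      apply Subtype.ext; simp [hγ1, gmat'_inv]
    have hε : ε ⟨gmat' N, hΓ (gmat'_mem N)⟩ = (ε γ1)⁻¹ := by rw [hginv, map_inv]
    have := hmod i him ⟨gmat' N, hΓ (gmat'_mem N)⟩ σ
    rw [hε] at this
    simpa [gmat'] using this
  induction n using Int.induction_on with
  | zero => simp [div_self hτne]
  | succ n ih =>
      have hxn : ((n:ℂ)*N + τ : ℂ) ≠ 0 := vadd_ne N n τ
      have h1 := key_up (ModularGroup.S • ((((n:ℤ):ℝ))*N +ᵥ τ))
      rw [pt_up N n τ] at h1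
      push_cast at h1 ih ⊢
      rw [h1, ih]
      rw [coe_S_smul, coe_vadd]
      push_cast
      have hbase : (-(N:ℂ)) * -((n:ℂ)*N + τ)⁻¹ + 1 = (((n:ℂ)+1)*N + τ)/((n:ℂ)*N + τ) := by
        rw [eq_div_iff hxn]; simp only [add_mul, mul_neg, neg_mul, neg_neg, mul_assoc, inv_mul_cancel₀ hxn]; ring
      rw [hbase]
      rw [zpow_add_one₀ hune]
      rw [show ((((n:ℂ)+1)*(N:ℂ) + (τ:ℂ))/(τ:ℂ))^e
          = ((((n:ℂ)+1)*N + τ)/((n:ℂ)*N + τ))^e * (((n:ℂ)*N + τ)/(τ:ℂ))^e by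
            rw [← mul_zpow, div_mul_div_cancel₀ hxn]]
      ring
  | pred n ih =>
      have hxn : ((-n:ℂ)*N + τ : ℂ) ≠ 0 := by have := vadd_ne N (-n) τ; push_cast at this ⊢; exact this
      have h1 := key_down (ModularGroup.S • ((((-n:ℤ):ℝ))*N +ᵥ τ))
      rw [show ((-n:ℤ):ℝ)*N +ᵥ τ = (((-n:ℤ)):ℝ)*N +ᵥ τ from rfl, pt_down N (-n) τ] at h1
      push_cast at h1 ih ⊢
      rw [h1, ih]
      rw [coe_S_smul, coe_vadd]
      push_cast
      have hbase : ((N:ℂ)) * -((-n:ℂ)*N + τ)⁻¹ + 1 = ((-(n:ℂ)-1)*N + τ)/(-(n:ℂ)*N + τ) := by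
        rw [neg_mul] at hxn ⊢
        rw [eq_div_iff hxn]; simp only [add_mul, mul_neg, neg_mul, neg_neg, mul_assoc, inv_mul_cancel₀ hxn]; ring
      rw [hbase]
      rw [show (-(n:ℤ)-1 : ℤ) = -(n:ℤ)-1 from rfl]
      rw [zpow_sub_one₀ hune]
      rw [show (((-(n:ℂ)-1)*(N:ℂ) + (τ:ℂ))/(τ:ℂ))^e
          = (((-(n:ℂ)-1)*N + τ)/(-(n:ℂ)*N + τ))^e * ((-(n:ℂ)*N + τ)/(τ:ℂ))^e by
            rw [← mul_zpow, div_mul_div_cancel₀ hxn]]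
      ring

lemma inv_seq_tendsto (τc c : ℂ) (hc : c ≠ 0) :
    Tendsto (fun n : ℕ => (τc + n*c)⁻¹) atTop (𝓝 0) := by
  rw [tendsto_zero_iff_norm_tendsto_zero]
  simp only [norm_inv]
  apply Tendsto.inv_tendsto_atTop
  have hb : Tendsto (fun n : ℕ => (n:ℝ)*‖c‖ - ‖τc‖) atTop atTop := by
    apply tendsto_atTop_add_const_right
    exact Tendsto.atTop_mul_const (norm_pos_iff.mpr hc) tendsto_natCast_atTop_atTop
  apply tendsto_atTop_mono _ hb
  intro n
  calc (n:ℝ)*‖c‖ - ‖τc‖ = ‖(n:ℂ)*c‖ - ‖τc‖ := by simp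
    _ ≤ ‖τc + n*c‖ := by
        have := norm_sub_norm_le ((n:ℂ)*c) (-τc)
        simp only [norm_neg] at this
        calc ‖(n:ℂ)*c‖ - ‖τc‖ ≤ ‖(n:ℂ)*c - -τc‖ := this
          _ = ‖τc + n*c‖ := by ring_nf

lemma poly_vanish (m N : ℕ) (hN : 0 < N) (τc : ℂ) (hτ : 0 < τc.im)
    (b : ℕ → ℂ) (z c0 : ℂ) (hc0 : c0 ≠ 0) (u : ℂˣ) (G : ℂ)
    (hrel : ∀ n : ℤ, G = (u:ℂ)^n *
      ∑ i ∈ Finset.range (m+1), b i * (z - c0 * (τc + n*N)⁻¹)^i) :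
    ∀ j, 1 ≤ j → j ≤ m → b j = 0 := by
  have hNc : ((N:ℂ)) ≠ 0 := Nat.cast_ne_zero.mpr hN.ne'
  set Q : ℂ → ℂ := fun v => ∑ i ∈ Finset.range (m+1), b i * (z - c0*v)^i with hQ
  have hQcont : Continuous Q := by
    apply continuous_finset_sum
    intro i _
    fun_prop
  have hune : (u:ℂ) ≠ 0 := Units.ne_zero u
  set v : ℂ := ((u:ℂ))⁻¹ with hv
  have hvne : v ≠ 0 := inv_ne_zero hune
  have hrelQ : ∀ n : ℤ, Q ((τc + n*N)⁻¹) = v^n * G := by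
    intro n
    rw [hrel n, ← mul_assoc, hv, ← mul_zpow, inv_mul_cancel₀ hune, one_zpow, one_mul]
  -- limits
  have hT1 : Tendsto (fun n : ℕ => Q ((τc + n*(N:ℂ))⁻¹)) atTop (𝓝 (Q 0)) := by
    exact (hQcont.tendsto 0).comp (inv_seq_tendsto τc N hNc)
  have hT2 : Tendsto (fun n : ℕ => Q ((τc + n*(-(N:ℂ)))⁻¹)) atTop (𝓝 (Q 0)) := by
    exact (hQcont.tendsto 0).comp (inv_seq_tendsto τc (-(N:ℂ)) (neg_ne_zero.mpr hNc))
  have hL1 : Tendsto (fun n : ℕ => v^(n:ℕ) * G) atTop (𝓝 (Q 0)) := by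
    apply hT1.congr
    intro n
    have := hrelQ (n : ℤ)
    push_cast at this
    rw [this, zpow_natCast]
  have hL2 : Tendsto (fun n : ℕ => ((u:ℂ))^(n:ℕ) * G) atTop (𝓝 (Q 0)) := by
    apply hT2.congr
    intro n
    have := hrelQ (-(n : ℤ))
    rw [show ((( -(n:ℤ) :ℤ)):ℂ) * N = (n:ℂ) * (-(N:ℂ)) by push_cast; ring] at this
    rw [this, hv, inv_zpow, zpow_neg, inv_inv, zpow_natCast]
  -- constancy
  have hconst : ∀ n : ℤ, Q ((τc + n*N)⁻¹) = Q 0 := by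
    by_cases hG : G = 0
    · have hQ0 : Q 0 = 0 := by
        refine tendsto_nhds_unique hL1 ?_
        simpa [hG] using (tendsto_const_nhds : Tendsto (fun _ : ℕ => (0:ℂ)) atTop (𝓝 0))
      intro n
      rw [hrelQ n, hG, mul_zero, hQ0]
    · have hvlim : Tendsto (fun n : ℕ => v^(n:ℕ)) atTop (𝓝 (Q 0 / G)) := by
        have := hL1.div_const G
        apply this.congr
        intro n
        rw [mul_div_cancel_right₀ _ hG]
      have hulim : Tendsto (fun n : ℕ => ((u:ℂ))^(n:ℕ)) atTop (𝓝 (Q 0 / G)) := by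
        have := hL2.div_const G
        apply this.congr
        intro n
        rw [mul_div_cancel_right₀ _ hG]
      have hsq : (Q 0 / G) * (Q 0 / G) = 1 := by
        refine tendsto_nhds_unique (hvlim.mul hulim) ?_
        have : (fun n : ℕ => v^n * ((u:ℂ))^n) = fun _ => (1:ℂ) := by
          funext n
          rw [← mul_pow, hv, inv_mul_cancel₀ hune, one_pow]
        rw [this]
        exact tendsto_const_nhds
      have hLne : Q 0 / G ≠ 0 := by
        intro h
        rw [h, mul_zero] at hsq
        exact zero_ne_one hsq
      have hshift : Tendsto (fun n : ℕ => v^(n+1)) atTop (𝓝 (Q 0 / G)) :=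
        hvlim.comp (tendsto_add_atTop_nat 1)
      have hshift' : Tendsto (fun n : ℕ => v^(n+1)) atTop (𝓝 (v * (Q 0 / G))) := by
        have := hvlim.const_mul v
        apply this.congr
        intro n
        rw [pow_succ, mul_comm]
      have hveq : v = 1 := by
        have h0 := tendsto_nhds_unique hshift hshift'
        have h1 : (v - 1) * (Q 0 / G) = 0 := by linear_combination -h0
        rcases mul_eq_zero.mp h1 with h | h
        · linear_combination h
        · exact absurd h hLne
      have hG0 : Q 0 = G := by
        refine tendsto_nhds_unique hL1 ?_
        simp only [hveq, one_pow, one_mul]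
        exact tendsto_const_nhds
      intro n
      rw [hrelQ n, hveq, one_zpow, one_mul, hG0]
  -- polynomial step 1
  have hxne : ∀ n : ℤ, (τc + n*N : ℂ) ≠ 0 := by
    intro n h
    have him : (τc + (n:ℂ)*(N:ℂ)).im = τc.im := by
      simp [Complex.add_im, Complex.mul_im]
    rw [h] at him
    simp only [Complex.zero_im] at him
    linarith
  set P : Polynomial ℂ :=
    (∑ i ∈ Finset.range (m+1),
      Polynomial.C (b i) * (Polynomial.C z - Polynomial.C c0 * Polynomial.X)^i)
      - Polynomial.C (Q 0) with hP
  have hPeval : ∀ w : ℂ, P.eval w = Q w - Q 0 := by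
    intro w
    simp [hP, hQ, Polynomial.eval_finset_sum]
  have hinj : Function.Injective (fun n : ℕ => (τc + n*(N:ℂ))⁻¹) := by
    intro a c h
    simp only at h
    have h2 : (τc + a*(N:ℂ)) = τc + c*(N:ℂ) := by
      have := inv_injective h
      exact this
    have h3 : (a:ℂ) = c := mul_right_cancel₀ hNc (add_left_cancel h2)
    exact_mod_cast h3
  have hinf : {x : ℂ | P.IsRoot x}.Infinite := by
    apply Set.infinite_of_injective_forall_mem hinj
    intro n
    simp only [Set.mem_setOf_eq, Polynomial.IsRoot, hPeval]
    have := hconst (n : ℤ)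
    push_cast at this
    rw [this, sub_self]
  have hP0 : P = 0 := Polynomial.eq_zero_of_infinite_isRoot P hinf
  have hQall : ∀ w : ℂ, Q w = Q 0 := by
    intro w
    have := hPeval w
    rw [hP0, Polynomial.eval_zero] at this
    linear_combination -this
  have hpoly : ∀ y : ℂ, ∑ i ∈ Finset.range (m+1), b i * y^i = Q 0 := by
    intro y
    have := hQall ((z - y)/c0)
    rw [hQ] at this
    simp only at this
    rw [show z - c0 * ((z - y)/c0) = y by field_simp; ring] at this
    exact this
  -- polynomial step 2
  set R : Polynomial ℂ := ∑ i ∈ Finset.range (m+1), Polynomial.C (b i) * Polynomial.X^i with hR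
  have hReq : R = Polynomial.C (Q 0) := by
    apply Polynomial.funext
    intro y
    rw [hR]
    simp [Polynomial.eval_finset_sum]
    exact hpoly y
  intro j hj1 hjm
  have hcoeff := congrArg (fun p => Polynomial.coeff p j) hReq
  simp only [hR, Polynomial.finset_sum_coeff, Polynomial.coeff_C_mul,
    Polynomial.coeff_X_pow, Polynomial.coeff_C, mul_ite, mul_one, mul_zero] at hcoeff
  rw [Finset.sum_ite_eq (Finset.range (m+1)) j b] at hcoeff
  rw [if_pos (Finset.mem_range.mpr (Nat.lt_succ_of_le hjm)), if_neg (by omega)] at hcoeff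
  exact hcoeff

lemma term_algebra (k : ℤ) (i : ℕ) (x t E c0 F U : ℂ) (hx : x ≠ 0) (ht : t ≠ 0) :
    x^(-k) * ((U * (x/t)^(k - 2*(i:ℤ)) * F) * (x^2*E - x*c0)^i)
      = U * ((t^(2*(i:ℤ) - k) * F) * (E - c0 * x⁻¹)^i) := by
  have h1 : x^2*E - x*c0 = x^2 * (E - c0*x⁻¹) := by field_simp
  rw [h1, mul_pow, div_zpow]
  have h2 : (x^2)^i = x^(2*(i:ℤ)) := by
    rw [← pow_mul, ← zpow_natCast]
    push_cast
    ring_nf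
  rw [h2, div_eq_mul_inv, ← zpow_neg, neg_sub]
  have hxx : x^(-k) * x^(k - 2*(i:ℤ)) * x^(2*(i:ℤ)) = 1 := by
    rw [← zpow_add₀ hx, ← zpow_add₀ hx, show -k + (k - 2*(i:ℤ)) + 2*(i:ℤ) = 0 by ring, zpow_zero]
  set A := x^(-k)
  set B := x^(k - 2*(i:ℤ))
  set Ci := x^(2*(i:ℤ))
  set D := t^(2*(i:ℤ) - k)
  set P := (E - c0*x⁻¹)^i
  linear_combination (U * D * F * P) * hxx

end Aux

theorem stmt17 (N : ℕ) (hN : 0 < N) (k : ℤ) (m : ℕ)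
    (Γ : Subgroup (Matrix.SpecialLinearGroup (Fin 2) ℤ))
    (hΓ : CongruenceSubgroup.Gamma N ≤ Γ)
    (ε : Γ →* ℂˣ)
    (f : UpperHalfPlane → ℂ) (f' : ℕ → UpperHalfPlane → ℂ) (E2 : UpperHalfPlane → ℂ)
    -- each f'_i is a holomorphic modular form of weight k - 2i on Γ with character ε,
    -- holomorphic at infinity with a q^{1/N}-expansion:
    (hol : ∀ i ≤ m, MDifferentiable 𝓘(ℂ) 𝓘(ℂ) (f' i))
    (hmod : ∀ i ≤ m, ∀ γ : Γ, ∀ τ : UpperHalfPlane,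
      f' i (((γ : Matrix.SpecialLinearGroup (Fin 2) ℤ)) • τ) =
        (ε γ : ℂ) *
          (((γ : Matrix.SpecialLinearGroup (Fin 2) ℤ) : Matrix (Fin 2) (Fin 2) ℤ) 1 0 * τ +
            ((γ : Matrix.SpecialLinearGroup (Fin 2) ℤ) : Matrix (Fin 2) (Fin 2) ℤ) 1 1) ^
              (k - 2 * i) * f' i τ)
    (hq : ∀ i ≤ m, HasQExpansion N (f' i))
    -- f = Σ_i f'_i E2^i :
    (hfE : ∀ τ : UpperHalfPlane, f τ = ∑ i ∈ Finset.range (m + 1), f' i τ * (E2 τ) ^ i)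
    -- the S-transformation law of E2 :
    (hE2q : HasQExpansion 1 E2)
    (hE2S : ∀ τ : UpperHalfPlane,
      E2 (ModularGroup.S • τ) = (τ : ℂ) ^ 2 * E2 τ - (τ : ℂ) / (2 * Real.pi * Complex.I))
    -- τ^{-k} f(Sτ) admits a q^{1/N}-expansion :
    (hfS : HasQExpansion N (fun τ => (τ : ℂ) ^ (-k) * f (ModularGroup.S • τ))) :
    ∀ i, 1 ≤ i → i ≤ m → f' i = 0 := by
  intro i0 hi01 hi0m
  funext ρ
  simp only [Pi.zero_apply]
  set τ : UpperHalfPlane := ModularGroup.S • ρ with hτdef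
  have hSS : ModularGroup.S • τ = ρ := by
    apply UpperHalfPlane.ext
    rw [coe_S_smul, coe_S_smul, inv_neg, neg_neg, inv_inv]
  have hτne : (τ:ℂ) ≠ 0 := UpperHalfPlane.ne_zero τ
  have h2pine : (2*(Real.pi:ℂ)*Complex.I) ≠ 0 := by
    simp [Real.pi_ne_zero, Complex.I_ne_zero]
  set c0 : ℂ := (2*(Real.pi:ℂ)*Complex.I)⁻¹ with hc0def
  have hc0ne : c0 ≠ 0 := inv_ne_zero h2pine
  set u : ℂˣ := ε ⟨gmat N, hΓ (gmat_mem N)⟩ with hudef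
  set b : ℕ → ℂ := fun i => (τ:ℂ)^(2*(i:ℤ) - k) * f' i (ModularGroup.S • τ) with hbdef
  have hrel : ∀ n : ℤ, ((τ:ℂ)^(-k) * f (ModularGroup.S • τ)) = (u:ℂ)^n *
      ∑ i ∈ Finset.range (m+1), b i * (E2 τ - c0 * ((τ:ℂ) + n*N)⁻¹)^i := by
    intro n
    have hper : ((((n:ℝ)*N) +ᵥ τ : UpperHalfPlane) : ℂ)^(-k)
        * f (ModularGroup.S • ((((n:ℝ)*N) +ᵥ τ))) = (τ:ℂ)^(-k) * f (ModularGroup.S • τ) :=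
      qexp_periodic hN hfS n τ
    rw [← hper, hfE]
    have hxco : ((((n:ℝ)*N) +ᵥ τ : UpperHalfPlane) : ℂ) = (τ:ℂ) + n*N := by
      rw [coe_vadd]; push_cast; ring
    have hxne : ((τ:ℂ) + n*N) ≠ 0 := by rw [← hxco]; exact UpperHalfPlane.ne_zero _
    have hE2per : E2 ((((n:ℝ))*N) +ᵥ τ) = E2 τ := by
      have h := qexp_periodic (Nat.one_pos) hE2q (n*N) τ
      rw [show (((n*N : ℤ)):ℝ) * ((1:ℕ):ℝ) = ((n:ℝ))*(N:ℝ) by push_cast; ring] at h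
      exact h
    rw [Finset.mul_sum, Finset.mul_sum]
    apply Finset.sum_congr rfl
    intro i hi
    have him : i ≤ m := Nat.lt_succ_iff.mp (Finset.mem_range.mp hi)
    rw [trans_rel N k m Γ hΓ ε f' hmod i him τ n, hE2S, hE2per, hxco]
    rw [show ((n:ℂ)*(N:ℂ) + (τ:ℂ)) = ((τ:ℂ) + (n:ℂ)*(N:ℂ)) from add_comm _ _]
    rw [show ((τ:ℂ) + n*N)/(2*(Real.pi:ℂ)*Complex.I) = ((τ:ℂ)+n*N) * c0 by
      rw [hc0def, div_eq_mul_inv]]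
    exact term_algebra k i ((τ:ℂ)+n*N) (τ:ℂ) (E2 τ) c0 (f' i (ModularGroup.S • τ)) ((u:ℂ)^n)
      hxne hτne
  have hvan := poly_vanish m N hN (τ:ℂ) τ.2 b (E2 τ) c0 hc0ne u
    ((τ:ℂ)^(-k) * f (ModularGroup.S • τ)) hrel
  have hb := hvan i0 hi01 hi0m
  rw [hbdef] at hb
  simp only at hb
  have hzne : ((τ:ℂ))^(2*(i0:ℤ) - k) ≠ 0 := zpow_ne_zero _ hτne
  have hf0 := (mul_eq_zero.mp hb).resolve_left hzne
  rwa [hSS] at hf0
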